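/- arXiv:1705.01193 — 3 statements merged into one kernel-verified Lean document; each statement's English description precedes it below -/
import Mathlib

section
/- Let f ∈ L¹(Ω,μ) and let f̃ be a boundary extension of f. Then for every integer i ≥ 1, ∫_{Ω_i} |f̃| dμ ≤ (p+q) · ∫_{1+Ω_i} |f̃| dμ, where 1+Ω_i = {(x+1, v) : (x,v) ∈ Ω_i}. -/
/-!
On `Ω_i` (`i ≥ 1`) the boundary relation and `‖∫ F‖ ≤ ∫ ‖F‖` give
`|f̃(x,v)| ≤ p ∫_V (w/v) k(w,v) |f̃(1 + xw/v, w)| ν(dw) + q |f̃(x+1, v)|`.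
Integrate over `Ω_i`. The `q`-term is the integral of `|f̃|` over the translate `1 + Ω_i`.
The fibre of `Ω_i` over `v` is `(-iv/b, -(i-1)v/b]`, linear in `v`, so the substitution
`y = 1 + xw/v` (Jacobian `w/v`) maps it onto the fibre of `1 + Ω_i` over `w`; Tonelli and
`∫_V k(w,v) ν(dv) = 1` then turn the `p`-term into `p` times the same integral.
The right-hand side is finite because `1 + Ω_i ⊆ Γ_{i-1}` up to the null line `x = 1`.
-/

open MeasureTheory Set Filter Topology

/-- The measure `ℓ(·,v)` on `V` given by
`ℓ(dw,v) = p w v⁻¹ k(w,v) ν(dw) + q δ_v(dw)`. -/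
noncomputable def ell (p q : ℝ) (k : ℝ → ℝ → ℝ) (ν : Measure ℝ) (V : Set ℝ) (v : ℝ) :
    Measure ℝ :=
  (ν.restrict V).withDensity (fun w => ENNReal.ofReal (p * w * v⁻¹ * k w v)) +
    (ENNReal.ofReal q) • Measure.dirac v

/-- The sets `Ω₀ = Ω = (0,1) × V` and, for `i ≥ 1`,
`Ω_i = {(x,v) : v ∈ V, −i v b⁻¹ < x ≤ −(i−1) v b⁻¹}`. -/
def Omi (b : ℝ) (V : Set ℝ) : ℕ → Set (ℝ × ℝ)
  | 0 => (Set.Ioo (0 : ℝ) 1) ×ˢ V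
  | (i + 1) =>
      {z : ℝ × ℝ | z.2 ∈ V ∧ -(((i : ℝ) + 1) * z.2 * b⁻¹) < z.1 ∧
        z.1 ≤ -((i : ℝ) * z.2 * b⁻¹)}

/-- `Γ_j = ⋃_{i=0}^{j} Ω_i`. -/
def Gam (b : ℝ) (V : Set ℝ) (j : ℕ) : Set (ℝ × ℝ) :=
  ⋃ i ∈ Finset.range (j + 1), Omi b V i

/-- A measurable function `f̃ : Ω̃ → ℝ` (modelled on all of `ℝ × ℝ`, with
`Ω̃ = (−∞,1) × V`), μ-integrable on each `Γ_j`, is a boundary extension of `f` if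
`f̃ = f` a.e. on `{x > 0}` and, a.e. on `{x ≤ 0}`, the function
`w ↦ f̃(1 + x w v⁻¹, w)` is `ℓ(·,v)`-integrable with
`f̃(x,v) = ∫_V f̃(1 + x w v⁻¹, w) ℓ(dw,v)`. -/
def IsBoundaryExtension (b p q : ℝ) (k : ℝ → ℝ → ℝ) (ν : Measure ℝ) (V : Set ℝ)
    (f ftil : ℝ × ℝ → ℝ) : Prop :=
  Measurable ftil ∧
  (∀ j : ℕ, IntegrableOn ftil (Gam b V j) ((volume : Measure ℝ).prod ν)) ∧
  (∀ᵐ z ∂(((volume : Measure ℝ).prod ν).restrict ((Set.Iio (1 : ℝ)) ×ˢ V)),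
    0 < z.1 → ftil z = f z) ∧
  (∀ᵐ z ∂(((volume : Measure ℝ).prod ν).restrict ((Set.Iio (1 : ℝ)) ×ˢ V)),
    z.1 ≤ 0 →
      Integrable (fun w => ftil (1 + z.1 * w * z.2⁻¹, w)) (ell p q k ν V z.2) ∧
      ftil z = ∫ w, ftil (1 + z.1 * w * z.2⁻¹, w) ∂(ell p q k ν V z.2))

open scoped ENNReal

def strip {X : Type*} (V : Set X) (α β : X → ℝ) : Set (ℝ × X) :=
  {z | z.2 ∈ V ∧ z.1 ∈ Ioc (α z.2) (β z.2)}

section Strip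

variable {X : Type*} {V : Set X} {α β : X → ℝ}

lemma image_add_const_strip (c : ℝ) :
    (fun z : ℝ × X => (z.1 + c, z.2)) '' strip V α β = strip V (α · + c) (β · + c) := by
  ext ⟨x, v⟩
  constructor
  · rintro ⟨⟨y, w⟩, ⟨hw, hy₁, hy₂⟩, h⟩
    obtain ⟨rfl, rfl⟩ := Prod.ext_iff.1 h
    exact ⟨hw, by dsimp; linarith, by dsimp; linarith⟩
  · rintro ⟨hv, hx₁, hx₂⟩
    exact ⟨(x - c, v), ⟨hv, lt_sub_iff_add_lt.2 hx₁, sub_le_iff_le_add.2 hx₂⟩, by simp⟩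

variable [MeasurableSpace X]

lemma measurableSet_strip (hV : MeasurableSet V) (hα : Measurable α) (hβ : Measurable β) :
    MeasurableSet (strip V α β) :=
  (measurable_snd hV).inter <| (measurableSet_lt (hα.comp measurable_snd) measurable_fst).inter
    (measurableSet_le measurable_fst (hβ.comp measurable_snd))

variable (μ : Measure ℝ) [SFinite μ] (ν : Measure X) [SFinite ν]

lemma measurable_lintegral_Ioc {G : ℝ × X → ℝ≥0∞} (hG : Measurable G) (hα : Measurable α)
    (hβ : Measurable β) : Measurable fun v => ∫⁻ x in Ioc (α v) (β v), G (x, v) ∂μ := by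
  have hS := measurableSet_strip MeasurableSet.univ hα hβ
  convert Measurable.lintegral_prod_left' (μ := μ) (hG.indicator hS) using 2 with v
  rw [← lintegral_indicator measurableSet_Ioc]
  congr 1
  ext x
  simp [indicator, strip]

lemma setLIntegral_strip (hV : MeasurableSet V) (hα : Measurable α) (hβ : Measurable β)
    {G : ℝ × X → ℝ≥0∞} (hG : Measurable G) :
    ∫⁻ z in strip V α β, G z ∂μ.prod ν = ∫⁻ v in V, ∫⁻ x in Ioc (α v) (β v), G (x, v) ∂μ ∂ν := by
  rw [← lintegral_indicator (measurableSet_strip hV hα hβ),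
    lintegral_prod_symm' _ (hG.indicator (measurableSet_strip hV hα hβ)),
    ← lintegral_indicator hV]
  congr 1
  ext v
  by_cases hv : v ∈ V
  · rw [indicator_of_mem hv, ← lintegral_indicator measurableSet_Ioc]
    congr 1
    ext x
    simp [indicator, strip, hv]
  · simp [indicator, strip, hv]

end Strip

lemma lintegral_Ioc_comp_mul_add {v w : ℝ} (hv : 0 < v) (hw : 0 < w) (h : ℝ → ℝ≥0∞) (s t : ℝ) :
    ∫⁻ x in Ioc (s * v) (t * v), ENNReal.ofReal (w * v⁻¹) * h (1 + x * w * v⁻¹) =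
      ∫⁻ y in Ioc (s * w + 1) (t * w + 1), h y := by
  have hc : 0 < w * v⁻¹ := by positivity
  have himage : (w * v⁻¹ * · + 1) '' Ioc (s * v) (t * v) = Ioc (s * w + 1) (t * w + 1) := by
    rw [image_affine_Ioc hc]
    congr 1 <;> field_simp
  have hderiv (x : ℝ) : HasDerivWithinAt (w * v⁻¹ * · + 1) (w * v⁻¹) (Ioc (s * v) (t * v)) x :=
    (((hasDerivAt_id x).const_mul _).add_const 1).hasDerivWithinAt.congr_deriv (mul_one _)
  have hinj : InjOn (w * v⁻¹ * · + 1) (Ioc (s * v) (t * v)) := fun x _ y _ hxy => by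
    simpa [hc.ne'] using hxy
  rw [← himage, lintegral_image_eq_lintegral_abs_deriv_mul measurableSet_Ioc
    (fun x _ => hderiv x) hinj, abs_of_pos hc]
  congr 1
  ext x
  ring_nf

lemma lintegral_ell {p q : ℝ} {k : ℝ → ℝ → ℝ} (ν : Measure ℝ) (V : Set ℝ) {v : ℝ}
    (hk : Measurable fun w => k w v) (G : ℝ → ℝ≥0∞) :
    ∫⁻ w, G w ∂ell p q k ν V v =
      ∫⁻ w in V, ENNReal.ofReal (p * w * v⁻¹ * k w v) * G w ∂ν + ENNReal.ofReal q * G v := by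
  rw [ell, lintegral_add_measure, lintegral_smul_measure, lintegral_dirac,
    lintegral_withDensity_eq_lintegral_mul_non_measurable _ (by fun_prop)
      (ae_of_all _ fun _ => ENNReal.ofReal_lt_top)]
  rfl

lemma enorm_le_lintegral_ell {p q : ℝ} {k : ℝ → ℝ → ℝ} (ν : Measure ℝ) (V : Set ℝ)
    {F : ℝ × ℝ → ℝ} {x v : ℝ} (hv : v ≠ 0) (hk : Measurable fun w => k w v)
    (h : F (x, v) = ∫ w, F (1 + x * w * v⁻¹, w) ∂ell p q k ν V v) :
    ‖F (x, v)‖ₑ ≤ ∫⁻ w in V, ENNReal.ofReal (p * w * v⁻¹ * k w v) * ‖F (1 + x * w * v⁻¹, w)‖ₑ ∂ν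
      + ENNReal.ofReal q * ‖F (x + 1, v)‖ₑ := by
  calc ‖F (x, v)‖ₑ ≤ ∫⁻ w, ‖F (1 + x * w * v⁻¹, w)‖ₑ ∂ell p q k ν V v := by
        rw [h]; exact enorm_integral_le_lintegral_enorm _
    _ = _ := by rw [lintegral_ell ν V hk, mul_inv_cancel_right₀ hv, add_comm 1 x]

lemma setLIntegral_setLIntegral_kernel {X : Type*} [MeasurableSpace X] {ν : Measure X}
    [SFinite ν] {V : Set X} (hV : MeasurableSet V) {k : X → X → ℝ}
    (hk : Measurable (Function.uncurry k)) (hknn : ∀ w v, 0 ≤ k w v)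
    (hk1 : ∀ w ∈ V, ∫ v in V, k w v ∂ν = 1) {A : X → ℝ≥0∞}
    (hA : Measurable A) :
    ∫⁻ v in V, ∫⁻ w in V, ENNReal.ofReal (k w v) * A w ∂ν ∂ν = ∫⁻ w in V, A w ∂ν := by
  rw [lintegral_lintegral_swap ((hk.comp measurable_swap).ennreal_ofReal.mul
    (hA.comp measurable_snd)).aemeasurable]
  refine setLIntegral_congr_fun hV fun w hw => ?_
  rw [lintegral_mul_const _ hk.of_uncurry_left.ennreal_ofReal,
    ← ofReal_integral_eq_lintegral_ofReal (integrable_of_integral_eq_one (hk1 w hw))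
      (ae_of_all _ (hknn w)), hk1 w hw, ENNReal.ofReal_one, one_mul]

lemma setLIntegral_strip_lintegral_kernel {p : ℝ} (hp : 0 ≤ p) {k : ℝ → ℝ → ℝ}
    (hk : Measurable (Function.uncurry k)) (hknn : ∀ w v, 0 ≤ k w v) {ν : Measure ℝ} [SFinite ν]
    {V : Set ℝ} (hV : MeasurableSet V) (hk1 : ∀ w ∈ V, ∫ v in V, k w v ∂ν = 1)
    (hVpos : ∀ v ∈ V, 0 < v) {g : ℝ × ℝ → ℝ≥0∞} (hg : Measurable g) (s t : ℝ) :
    ∫⁻ z in strip V (s * ·) (t * ·),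
        ∫⁻ w in V, ENNReal.ofReal (p * w * z.2⁻¹ * k w z.2) * g (1 + z.1 * w * z.2⁻¹, w) ∂ν
          ∂(volume.prod ν) =
      ENNReal.ofReal p * ∫⁻ z in strip V (s * · + 1) (t * · + 1), g z ∂(volume.prod ν) := by
  have hF : Measurable fun zw : (ℝ × ℝ) × ℝ => ENNReal.ofReal (p * zw.2 * zw.1.2⁻¹ * k zw.2 zw.1.2)
      * g (1 + zw.1.1 * zw.2 * zw.1.2⁻¹, zw.2) := by
    have : Measurable fun zw : (ℝ × ℝ) × ℝ => k zw.2 zw.1.2 :=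
      hk.comp (f := fun zw : (ℝ × ℝ) × ℝ => (zw.2, zw.1.2)) (by fun_prop)
    fun_prop
  set A : ℝ → ℝ≥0∞ := fun w => ∫⁻ y in Ioc (s * w + 1) (t * w + 1), g (y, w)
  have hinner : ∀ v ∈ V, ∫⁻ x in Ioc (s * v) (t * v), ∫⁻ w in V,
        ENNReal.ofReal (p * w * v⁻¹ * k w v) * g (1 + x * w * v⁻¹, w) ∂ν =
      ∫⁻ w in V, ENNReal.ofReal p * (ENNReal.ofReal (k w v) * A w) ∂ν := by
    intro v hv
    rw [lintegral_lintegral_swap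
      (by exact (hF.comp (f := fun xw : ℝ × ℝ => ((xw.1, v), xw.2)) (by fun_prop)).aemeasurable)]
    refine setLIntegral_congr_fun hV fun w hw => ?_
    simp only [A]
    rw [← lintegral_Ioc_comp_mul_add (hVpos v hv) (hVpos w hw), ← lintegral_const_mul' _ _
      ENNReal.ofReal_ne_top, ← lintegral_const_mul' _ _ ENNReal.ofReal_ne_top]
    congr 1
    ext x
    rw [show p * w * v⁻¹ * k w v = p * (k w v * (w * v⁻¹)) by ring,
      ENNReal.ofReal_mul hp, ENNReal.ofReal_mul (hknn w v)]
    ring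
  rw [setLIntegral_strip _ _ hV (by fun_prop) (by fun_prop) hF.lintegral_prod_right,
    setLIntegral_strip _ _ hV (by fun_prop) (by fun_prop) hg, setLIntegral_congr_fun hV hinner]
  simp_rw [lintegral_const_mul' _ _ ENNReal.ofReal_ne_top]
  rw [setLIntegral_setLIntegral_kernel hV hk hknn hk1
    (measurable_lintegral_Ioc _ hg (by fun_prop) (by fun_prop))]

lemma setLIntegral_comp_add_const_fst (ν : Measure ℝ) [SFinite ν] (c : ℝ) (g : ℝ × ℝ → ℝ≥0∞)
    (S : Set (ℝ × ℝ)) :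
    ∫⁻ z in S, g (z.1 + c, z.2) ∂(volume.prod ν) =
      ∫⁻ z in (fun z : ℝ × ℝ => (z.1 + c, z.2)) '' S, g z ∂(volume.prod ν) :=
  ((measurePreserving_add_right volume c).prod (MeasurePreserving.id ν)).setLIntegral_comp_emb
    ((Homeomorph.addRight c).measurableEmbedding.prodMap MeasurableEmbedding.id) g S

lemma Omi_succ_eq_strip (b : ℝ) (V : Set ℝ) (j : ℕ) :
    Omi b V (j + 1) = strip V (-((j + 1) * b⁻¹) * ·) (-(j * b⁻¹) * ·) := by
  ext z
  simp only [Omi, strip, mem_ofPred_eq, mem_Ioc]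
  ring_nf

lemma Omi_succ_subset {b : ℝ} (hb : 0 < b) {V : Set ℝ} (hV : ∀ v ∈ V, 0 < v) (j : ℕ) :
    Omi b V (j + 1) ⊆ {z | z.1 ≤ 0} ∩ Iio 1 ×ˢ V := by
  rintro z ⟨hv, -, hx⟩
  have : 0 ≤ j * z.2 * b⁻¹ := by have := hV _ hv; positivity
  exact ⟨show z.1 ≤ 0 by linarith, show z.1 < 1 by linarith, hv⟩

lemma mk_mem_Gam {b : ℝ} (hb : 0 < b) {V : Set ℝ} {x v : ℝ} (hv : v ∈ V) (hv0 : 0 < v) {j : ℕ}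
    (hx : -(j * v * b⁻¹) < x) (hx1 : x < 1) : (x, v) ∈ Gam b V j := by
  simp only [Gam, mem_iUnion, Finset.mem_range, exists_prop]
  rcases lt_or_ge 0 x with hx0 | hx0
  · exact ⟨0, j.succ_pos, ⟨hx0, hx1⟩, hv⟩
  -- `x` lies in `Ω_{m+1}` for `m = ⌊-x b / v⌋`
  set t := -x * b / v with ht
  have ht0 : 0 ≤ t := div_nonneg (mul_nonneg (neg_nonneg.2 hx0) hb.le) hv0.le
  have hxt : x = -(t * (v * b⁻¹)) := by rw [ht]; field_simp
  have hc : 0 < v * b⁻¹ := by positivity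
  have htj : t < j := by
    by_contra! h
    nlinarith
  refine ⟨⌊t⌋₊ + 1, by have := (Nat.floor_lt ht0).2 htj; omega, hv, ?_, ?_⟩
  · have := Nat.lt_floor_add_one t
    push_cast
    nlinarith
  · have := Nat.floor_le ht0
    nlinarith

lemma image_Omi_succ_ae_le_Gam {b : ℝ} (hb : 0 < b) {V : Set ℝ} (hV : ∀ v ∈ V, 0 < v ∧ v < b)
    (ν : Measure ℝ) [SFinite ν] (j : ℕ) :
    (fun z : ℝ × ℝ => (z.1 + 1, z.2)) '' Omi b V (j + 1) ≤ᵐ[volume.prod ν] Gam b V j := by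
  have hnull : volume.prod ν (Prod.fst ⁻¹' {(1 : ℝ)}) = 0 := by
    rw [← prod_univ, Measure.prod_prod, Real.volume_singleton, zero_mul]
  refine ae_le_set.2 (measure_mono_null (fun z ⟨hz, hzG⟩ => ?_) hnull)
  rw [Omi_succ_eq_strip, image_add_const_strip] at hz
  obtain ⟨hv, hx₁, hx₂⟩ := hz
  dsimp only at hx₁ hx₂
  obtain ⟨hv0, hvb⟩ := hV _ hv
  have hvb' : z.2 * b⁻¹ < 1 := by rwa [← div_eq_mul_inv, div_lt_one hb]
  by_contra hz1
  refine hzG (mk_mem_Gam hb hv hv0 ?_ (lt_of_le_of_ne ?_ hz1))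
  · nlinarith
  · have : 0 ≤ j * b⁻¹ * z.2 := by positivity
    linarith

lemma IsBoundaryExtension.ae_enorm_le {b p q : ℝ} {k : ℝ → ℝ → ℝ} {ν : Measure ℝ} [SFinite ν]
    {V : Set ℝ} {f ftil : ℝ × ℝ → ℝ} (hext : IsBoundaryExtension b p q k ν V f ftil) (hb : 0 < b)
    (hV : MeasurableSet V) (hVpos : ∀ v ∈ V, 0 < v) (hk : Measurable (Function.uncurry k))
    (j : ℕ) :
    ∀ᵐ z ∂(volume.prod ν).restrict (Omi b V (j + 1)), ‖ftil z‖ₑ ≤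
      ∫⁻ w in V, ENNReal.ofReal (p * w * z.2⁻¹ * k w z.2) * ‖ftil (1 + z.1 * w * z.2⁻¹, w)‖ₑ ∂ν
        + ENNReal.ofReal q * ‖ftil (z.1 + 1, z.2)‖ₑ := by
  have hsub := Omi_succ_subset hb hVpos j
  have hmeas : MeasurableSet (Omi b V (j + 1)) := by
    rw [Omi_succ_eq_strip]
    exact measurableSet_strip hV (by fun_prop) (by fun_prop)
  filter_upwards [ae_restrict_of_ae_restrict_of_subset (hsub.trans inter_subset_right) hext.2.2.2,
    ae_restrict_mem hmeas] with z hz hzΩ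
  exact enorm_le_lintegral_ell ν V (hVpos _ (hsub hzΩ).2.2).ne' hk.of_uncurry_right
    (hz (hsub hzΩ).1).2

lemma setLIntegral_Omi_succ_le {p q : ℝ} (hp : 0 ≤ p) (hq : 0 ≤ q) {k : ℝ → ℝ → ℝ}
    (hk : Measurable (Function.uncurry k)) (hknn : ∀ w v, 0 ≤ k w v) {ν : Measure ℝ} [SFinite ν]
    {V : Set ℝ} (hV : MeasurableSet V) (hk1 : ∀ w ∈ V, ∫ v in V, k w v ∂ν = 1)
    (hVpos : ∀ v ∈ V, 0 < v) (b : ℝ) (j : ℕ) {g : ℝ × ℝ → ℝ≥0∞} (hg : Measurable g)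
    (hbound : ∀ᵐ z ∂(volume.prod ν).restrict (Omi b V (j + 1)), g z ≤
      ∫⁻ w in V, ENNReal.ofReal (p * w * z.2⁻¹ * k w z.2) * g (1 + z.1 * w * z.2⁻¹, w) ∂ν
        + ENNReal.ofReal q * g (z.1 + 1, z.2)) :
    ∫⁻ z in Omi b V (j + 1), g z ∂(volume.prod ν) ≤
      ENNReal.ofReal (p + q) *
        ∫⁻ z in (fun z : ℝ × ℝ => (z.1 + 1, z.2)) '' Omi b V (j + 1), g z ∂(volume.prod ν) := by
  refine (lintegral_mono_ae hbound).trans_eq ?_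
  rw [lintegral_add_right _ (by fun_prop), lintegral_const_mul' _ _ ENNReal.ofReal_ne_top,
    setLIntegral_comp_add_const_fst ν 1 g, Omi_succ_eq_strip,
    setLIntegral_strip_lintegral_kernel hp hk hknn hV hk1 hVpos hg, image_add_const_strip,
    ENNReal.ofReal_add hp hq, add_mul (ENNReal.ofReal p)]

theorem stmt1_general
    (a b p q : ℝ) (ha : 0 ≤ a) (hab : a < b)
    (hp : 0 ≤ p) (hq : 0 ≤ q)
    (V : Set ℝ) (hV : V ⊆ Set.Ioo a b) (hVm : MeasurableSet V)
    (ν : Measure ℝ) [SigmaFinite ν]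
    (k : ℝ → ℝ → ℝ) (hkm : Measurable (Function.uncurry k))
    (hknn : ∀ w v : ℝ, 0 ≤ k w v)
    (hk1 : ∀ w ∈ V, ∫ v in V, k w v ∂ν = 1)
    (f ftil : ℝ × ℝ → ℝ)
    (hext : IsBoundaryExtension b p q k ν V f ftil)
    (i : ℕ) (hi : 1 ≤ i) :
    ∫ z in Omi b V i, |ftil z| ∂((volume : Measure ℝ).prod ν)
      ≤ (p + q) *
        ∫ z in (fun z : ℝ × ℝ => (z.1 + 1, z.2)) '' (Omi b V i), |ftil z|
          ∂((volume : Measure ℝ).prod ν) := by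
  obtain ⟨j, rfl⟩ := Nat.exists_eq_add_of_le' hi
  have hb : 0 < b := ha.trans_lt hab
  have hVpos : ∀ v ∈ V, 0 < v := fun v hv => ha.trans_lt (hV hv).1
  have hmeas : Measurable ftil := hext.1
  have hfin : ∫⁻ z in (fun z : ℝ × ℝ => (z.1 + 1, z.2)) '' Omi b V (j + 1), ‖ftil z‖ₑ
      ∂(volume.prod ν) ≠ ∞ :=
    ((hext.2.1 j).mono_set_ae (image_Omi_succ_ae_le_Gam hb
      (fun v hv => ⟨hVpos v hv, (hV hv).2⟩) ν j)).hasFiniteIntegral.ne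
  have hle := setLIntegral_Omi_succ_le hp hq hkm hknn hVm hk1 hVpos b j hmeas.enorm
    (hext.ae_enorm_le hb hVm hVpos hkm j)
  simp_rw [← Real.norm_eq_abs, integral_norm_eq_lintegral_enorm hmeas.aestronglyMeasurable]
  rw [← ENNReal.toReal_ofReal (add_nonneg hp hq), ← ENNReal.toReal_mul]
  exact ENNReal.toReal_mono (ENNReal.mul_ne_top ENNReal.ofReal_ne_top hfin) hle

theorem stmt1
    (a b p q : ℝ) (ha : 0 ≤ a) (hab : a < b)
    (hp : 0 ≤ p) (hq : 0 ≤ q) (hpq : 0 < p + q)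
    (V : Set ℝ) (hV : V ⊆ Set.Ioo a b) (hVm : MeasurableSet V)
    (ν : Measure ℝ) [SigmaFinite ν]
    (k : ℝ → ℝ → ℝ) (hkm : Measurable (Function.uncurry k))
    (hknn : ∀ w v : ℝ, 0 ≤ k w v)
    (hk1 : ∀ w ∈ V, ∫ v in V, k w v ∂ν = 1)
    (f ftil : ℝ × ℝ → ℝ)
    (hf : IntegrableOn f ((Set.Ioo (0 : ℝ) 1) ×ˢ V) ((volume : Measure ℝ).prod ν))
    (hext : IsBoundaryExtension b p q k ν V f ftil)
    (i : ℕ) (hi : 1 ≤ i) :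
    ∫ z in Omi b V i, |ftil z| ∂((volume : Measure ℝ).prod ν)
      ≤ (p + q) *
        ∫ z in (fun z : ℝ × ℝ => (z.1 + 1, z.2)) '' (Omi b V i), |ftil z|
          ∂((volume : Measure ℝ).prod ν) :=
  stmt1_general a b p q ha hab hp hq V hV hVm ν k hkm hknn hk1 f ftil hext i hi
end

section
/- For each f ∈ L¹(Ω,μ), the boundary extension of f is unique up to sets of μ-measure zero: if f̃₁ and f̃₂ are both boundary extensions of f, then f̃₁ = f̃₂ μ-almost everywhere on Ω̃. -/
/-!
Let `Γₙ` be the part of `Ω̃` above depth `-n v / b`. On `Γ₀ = Ω` two boundary extensions both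
equal `f`. If they agree a.e. on `Γₙ`, take `(x, v) ∈ Γₙ₊₁` with `x < 0`: the fixed-point equation
samples the extensions only at points `(1 + x w / v, w)`, `w ∈ V`, and these lie in `Γₙ`. Since
`x ↦ 1 + x w / v` and `x ↦ 1 + x` do not charge null sets, Fubini shows that for a.e. such
`(x, v)` the two integrands agree `ℓ(·, v)`-a.e., so the extensions agree at `(x, v)`. The sets
`Γₙ` exhaust `Ω̃`.
-/

open MeasureTheory Set Filter Topology

theorem ae_one_add_mul_mem {c : ℝ} (hc : c ≠ 0) {S : Set ℝ} (h : ∀ᵐ y, y ∈ S) :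
    ∀ᵐ x, 1 + x * c ∈ S := by
  have := ((measurePreserving_add_left volume (1 : ℝ)).quasiMeasurePreserving.comp
    (Measure.quasiMeasurePreserving_smul volume hc)).ae h
  simpa [mul_comm] using this

section NullSets

variable {ν : Measure ℝ} [SFinite ν] {s : Set (ℝ × ℝ)}

theorem ae_one_add_fst_mem (h : ∀ᵐ z ∂(volume : Measure ℝ).prod ν, z ∈ s) :
    ∀ᵐ z ∂(volume : Measure ℝ).prod ν, (1 + z.1, z.2) ∈ s :=
  ((measurePreserving_add_left volume 1).prod (MeasurePreserving.id ν)).quasiMeasurePreserving.ae h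

theorem ae_ae_one_add_mul_mem (hs : MeasurableSet s)
    (h : ∀ᵐ z ∂(volume : Measure ℝ).prod ν, z ∈ s) :
    ∀ᵐ z ∂(volume : Measure ℝ).prod ν, z.2 ≠ 0 →
      ∀ᵐ w ∂ν, w ≠ 0 → (1 + z.1 * w * z.2⁻¹, w) ∈ s := by
  set P : ℝ → ℝ → ℝ → Prop := fun x v w => v ≠ 0 → w ≠ 0 → (1 + x * w * v⁻¹, w) ∈ s
  have hPm : MeasurableSet {p : (ℝ × ℝ) × ℝ | P p.1.1 p.1.2 p.2} := by
    simp only [P]; measurability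
  have hPm' (w : ℝ) : MeasurableSet {z : ℝ × ℝ | P z.1 z.2 w} := measurable_prodMk_right hPm
  have hslice : ∀ᵐ w ∂ν, ∀ᵐ y, (y, w) ∈ s :=
    (Measure.ae_ae_comm (p := fun y w => (y, w) ∈ s) hs).mp
      ((Measure.ae_prod_mem_iff_ae_ae_mem hs).mp h)
  have hfiber : ∀ᵐ w ∂ν, ∀ᵐ v ∂ν, ∀ᵐ x, P x v w := by
    filter_upwards [hslice] with w hw
    refine ae_of_all _ fun v => ?_
    by_cases hv : v = 0
    · exact ae_of_all _ fun _ hv' => absurd hv hv'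
    by_cases hw0 : w = 0
    · exact ae_of_all _ fun _ _ hw' => absurd hw0 hw'
    filter_upwards [ae_one_add_mul_mem (S := {y | (y, w) ∈ s})
      (mul_ne_zero hw0 (inv_ne_zero hv)) hw] with x hx _ _
    rwa [mul_assoc]
  have hprod : ∀ᵐ p ∂((volume : Measure ℝ).prod ν).prod ν, P p.1.1 p.1.2 p.2 := by
    refine (Measure.ae_prod_iff_ae_ae hPm).mpr
      ((Measure.ae_ae_comm (p := fun (z : ℝ × ℝ) w => P z.1 z.2 w) hPm).mpr ?_)
    filter_upwards [hfiber] with w hw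
    exact (Measure.ae_prod_iff_ae_ae (hPm' w)).mpr
      ((Measure.ae_ae_comm (p := fun x v => P x v w) (hPm' w)).mpr hw)
  filter_upwards [Measure.ae_ae_of_ae_prod hprod] with z hz hz2
  filter_upwards [hz] with w hw using hw hz2

end NullSets

theorem ae_ell_of_ae_restrict {p q : ℝ} {k : ℝ → ℝ → ℝ} {ν : Measure ℝ} {V : Set ℝ} {v : ℝ}
    {P : ℝ → Prop} (hV : ∀ᵐ w ∂ν.restrict V, P w) (hv : P v) :
    ∀ᵐ w ∂ell p q k ν V v, P w := by
  rw [ell, ae_add_measure_iff]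
  refine ⟨(withDensity_absolutelyContinuous _ _).ae_le hV, Measure.ae_smul_measure ?_ _⟩
  rwa [ae_dirac_eq, eventually_pure]

/-- The set `Γₙ = Gam b V n` when `V ⊆ (0, b)`, without the case split in `Omi`. -/
def slab (b : ℝ) (V : Set ℝ) (n : ℕ) : Set (ℝ × ℝ) :=
  {z | z.2 ∈ V ∧ z.1 < 1 ∧ -(n * z.2 * b⁻¹) < z.1}

section Slab

variable {b : ℝ} {V : Set ℝ}

theorem measurableSet_slab (hV : MeasurableSet V) (n : ℕ) : MeasurableSet (slab b V n) :=
  (hV.preimage measurable_snd).inter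
    ((measurableSet_lt measurable_fst measurable_const).inter
      (measurableSet_lt (by fun_prop) measurable_fst))

theorem mem_slab_of_pos (hV : V ⊆ Ioo 0 b) {m : ℕ} {z : ℝ × ℝ} (hz : z ∈ slab b V m)
    (hx : 0 < z.1) (n : ℕ) : z ∈ slab b V n := by
  obtain ⟨hv0, hvb⟩ := hV hz.1
  have : 0 ≤ n * z.2 * b⁻¹ := by have := hv0.trans hvb; positivity
  exact ⟨hz.1, hz.2.1, by linarith⟩

theorem one_add_mul_mem_slab (hV : V ⊆ Ioo 0 b) {n : ℕ} {x v w : ℝ}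
    (hz : (x, v) ∈ slab b V (n + 1)) (hx : x < 0) (hw : w ∈ V) :
    (1 + x * w * v⁻¹, w) ∈ slab b V n := by
  obtain ⟨hvV, -, hxn⟩ : v ∈ V ∧ x < 1 ∧ -((n + 1 : ℕ) * v * b⁻¹) < x := hz
  obtain ⟨hv0, -⟩ := hV hvV
  obtain ⟨hw0, hwb⟩ := hV hw
  have hb : 0 < b := hw0.trans hwb
  have hwv : 0 < w * v⁻¹ := by positivity
  refine ⟨hw, by nlinarith, ?_⟩
  have hscaled : -((n + 1) * w * b⁻¹) < x * w * v⁻¹ := by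
    have := mul_lt_mul_of_pos_right hxn hwv
    field_simp at this ⊢
    push_cast at this
    linarith
  have hwb' : w * b⁻¹ < 1 := by
    rw [← div_eq_mul_inv, div_lt_one hb]
    exact hwb
  linarith

theorem exists_mem_slab (hV : V ⊆ Ioo 0 b) {z : ℝ × ℝ} (hz : z ∈ Iio 1 ×ˢ V) :
    ∃ n : ℕ, z ∈ slab b V n := by
  obtain ⟨hx, hv⟩ := hz
  obtain ⟨hv0, hvb⟩ := hV hv
  have hb : 0 < b := hv0.trans hvb
  obtain ⟨n, hn⟩ := exists_nat_gt (-z.1 * b * z.2⁻¹)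
  refine ⟨n, hv, hx, ?_⟩
  have := mul_lt_mul_of_pos_right hn (by positivity : 0 < z.2 * b⁻¹)
  field_simp at this ⊢
  linarith

end Slab

namespace IsBoundaryExtension

variable {b p q : ℝ} {k : ℝ → ℝ → ℝ} {ν : Measure ℝ} [SFinite ν] {V : Set ℝ}
  {f g₁ g₂ : ℝ × ℝ → ℝ}

theorem ae_eq_on_slab_succ (h₁ : IsBoundaryExtension b p q k ν V f g₁)
    (h₂ : IsBoundaryExtension b p q k ν V f g₂) (hV : V ⊆ Ioo 0 b) (hVm : MeasurableSet V)
    {n : ℕ} (ih : ∀ᵐ z ∂(volume : Measure ℝ).prod ν, z ∈ slab b V n → g₁ z = g₂ z) :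
    ∀ᵐ z ∂(volume : Measure ℝ).prod ν, z ∈ slab b V (n + 1) → g₁ z = g₂ z := by
  have hs : MeasurableSet {z | z ∈ slab b V n → g₁ z = g₂ z} :=
    (measurableSet_slab hVm n).imp (measurableSet_eq_fun h₁.1 h₂.1)
  have hΩ : MeasurableSet (Iio (1 : ℝ) ×ˢ V) := measurableSet_Iio.prod hVm
  filter_upwards [(ae_restrict_iff' hΩ).mp h₁.2.2.2, (ae_restrict_iff' hΩ).mp h₂.2.2.2, ih,
    ae_ae_one_add_mul_mem hs ih, ae_one_add_fst_mem ih,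
    Measure.quasiMeasurePreserving_fst.ae (Measure.ae_ne volume 0)]
    with ⟨x, v⟩ fix₁ fix₂ hslab hsample hshift hx0 hz
  dsimp only at fix₁ fix₂ hsample hshift hx0
  rcases lt_or_ge 0 x with hx | hx
  · exact hslab (mem_slab_of_pos hV hz hx n)
  have hx' : x < 0 := lt_of_le_of_ne hx hx0
  have hv0 : v ≠ 0 := (hV hz.1).1.ne'
  have hzΩ : (x, v) ∈ Iio 1 ×ˢ V := ⟨hz.2.1, hz.1⟩
  rw [(fix₁ hzΩ hx).2, (fix₂ hzΩ hx).2]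
  refine integral_congr_ae (ae_ell_of_ae_restrict ?_ ?_)
  · rw [ae_restrict_iff' hVm]
    filter_upwards [hsample hv0] with w hw hwV
    exact hw (hV hwV).1.ne' (one_add_mul_mem_slab hV hz hx' hwV)
  · have hdiag := one_add_mul_mem_slab hV hz hx' hz.1
    show g₁ (1 + x * v * v⁻¹, v) = g₂ (1 + x * v * v⁻¹, v)
    rw [mul_inv_cancel_right₀ hv0] at hdiag ⊢
    exact hshift hdiag

theorem ae_eq_on_slab (h₁ : IsBoundaryExtension b p q k ν V f g₁)
    (h₂ : IsBoundaryExtension b p q k ν V f g₂) (hV : V ⊆ Ioo 0 b) (hVm : MeasurableSet V)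
    (n : ℕ) : ∀ᵐ z ∂(volume : Measure ℝ).prod ν, z ∈ slab b V n → g₁ z = g₂ z := by
  induction n with
  | zero =>
    have hΩ : MeasurableSet (Iio (1 : ℝ) ×ˢ V) := measurableSet_Iio.prod hVm
    filter_upwards [(ae_restrict_iff' hΩ).mp h₁.2.2.1, (ae_restrict_iff' hΩ).mp h₂.2.2.1]
      with z hf₁ hf₂ hz
    have hx : 0 < z.1 := by simpa [slab] using hz.2.2
    rw [hf₁ ⟨hz.2.1, hz.1⟩ hx, hf₂ ⟨hz.2.1, hz.1⟩ hx]
  | succ n ih => exact h₁.ae_eq_on_slab_succ h₂ hV hVm ih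

end IsBoundaryExtension

theorem stmt4_general
    (a b p q : ℝ) (ha : 0 ≤ a)
    (V : Set ℝ) (hV : V ⊆ Set.Ioo a b) (hVm : MeasurableSet V)
    (ν : Measure ℝ) [SigmaFinite ν]
    (k : ℝ → ℝ → ℝ)
    (f ftil₁ ftil₂ : ℝ × ℝ → ℝ)
    (hext₁ : IsBoundaryExtension b p q k ν V f ftil₁)
    (hext₂ : IsBoundaryExtension b p q k ν V f ftil₂) :
    ∀ᵐ z ∂(((volume : Measure ℝ).prod ν).restrict ((Set.Iio (1 : ℝ)) ×ˢ V)),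
      ftil₁ z = ftil₂ z := by
  have hV₀ : V ⊆ Ioo 0 b := fun v hv => ⟨ha.trans_lt (hV hv).1, (hV hv).2⟩
  rw [ae_restrict_iff' (measurableSet_Iio.prod hVm)]
  filter_upwards [ae_all_iff.mpr (hext₁.ae_eq_on_slab hext₂ hV₀ hVm)] with z hslab hz
  obtain ⟨n, hn⟩ := exists_mem_slab hV₀ hz
  exact hslab n hn

theorem stmt4
    (a b p q : ℝ) (ha : 0 ≤ a) (hab : a < b)
    (hp : 0 ≤ p) (hq : 0 ≤ q) (hpq : 0 < p + q)
    (V : Set ℝ) (hV : V ⊆ Set.Ioo a b) (hVm : MeasurableSet V)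
    (ν : Measure ℝ) [SigmaFinite ν]
    (k : ℝ → ℝ → ℝ) (hkm : Measurable (Function.uncurry k))
    (hknn : ∀ w v : ℝ, 0 ≤ k w v)
    (hk1 : ∀ w ∈ V, ∫ v in V, k w v ∂ν = 1)
    (f ftil₁ ftil₂ : ℝ × ℝ → ℝ)
    (hf : IntegrableOn f ((Set.Ioo (0 : ℝ) 1) ×ˢ V) ((volume : Measure ℝ).prod ν))
    (hext₁ : IsBoundaryExtension b p q k ν V f ftil₁)
    (hext₂ : IsBoundaryExtension b p q k ν V f ftil₂) :
    ∀ᵐ z ∂(((volume : Measure ℝ).prod ν).restrict ((Set.Iio (1 : ℝ)) ×ˢ V)),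
      ftil₁ z = ftil₂ z :=
  stmt4_general a b p q ha V hV hVm ν k f ftil₁ ftil₂ hext₁ hext₂
end

section
/- Let f ∈ L¹(Ω,μ) satisfy f ≥ 0 μ-almost everywhere on Ω, and let f̃ be a boundary extension of f. Then f̃ ≥ 0 μ-almost everywhere on Ω̃. -/
open MeasureTheory Set Filter Topology

/-! On the strip `Ω_{i+1}` the recursion `f̃(x,v) = ∫ f̃(1 + x w v⁻¹, w) ℓ(dw,v)` only evaluates
`f̃` at points of `Γ_i`, because `w < b`; so nonnegativity spreads strip by strip from
`Γ₀ = Ω`, where `f̃ = f`. The exceptional null sets are carried along by Fubini: for fixed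
`v, w ≠ 0` the map `x ↦ 1 + x w v⁻¹` is affine and pulls Lebesgue-null sets back to null sets. -/

section Strips

variable {b : ℝ} {V : Set ℝ}

lemma measurableSet_Omi (hV : MeasurableSet V) (i : ℕ) : MeasurableSet (Omi b V i) := by
  cases i with
  | zero => exact measurableSet_Ioo.prod hV
  | succ i =>
    exact (measurable_snd hV).inter
      ((measurableSet_lt (by fun_prop) measurable_fst).inter
        (measurableSet_le measurable_fst (by fun_prop)))

lemma measurableSet_Gam (hV : MeasurableSet V) (j : ℕ) : MeasurableSet (Gam b V j) :=
  .biUnion (Finset.range (j + 1)).countable_toSet fun i _ => measurableSet_Omi hV i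

lemma fst_nonpos_of_mem_Omi_succ (hV : V ⊆ Ioo 0 b) {i : ℕ} {z : ℝ × ℝ}
    (hz : z ∈ Omi b V (i + 1)) : z.1 ≤ 0 := by
  obtain ⟨hv, -, hx⟩ := hz
  obtain ⟨hv0, hvb⟩ := hV hv
  have hb : 0 < b := hv0.trans hvb
  have : 0 ≤ (i : ℝ) * z.2 * b⁻¹ := by positivity
  linarith

lemma Omi_succ_subset_Iio_prod (hV : V ⊆ Ioo 0 b) (i : ℕ) : Omi b V (i + 1) ⊆ Iio 1 ×ˢ V :=
  fun _ hz => ⟨(fst_nonpos_of_mem_Omi_succ hV hz).trans_lt one_pos, hz.1⟩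

lemma Gam_zero : Gam b V 0 = Ioo 0 1 ×ˢ V := by
  simp [Gam, Omi]

lemma Gam_succ (i : ℕ) : Gam b V (i + 1) = Gam b V i ∪ Omi b V (i + 1) := by
  simp only [Gam, Finset.range_add_one, Finset.mem_insert, iUnion_iUnion_eq_or_left, union_comm]

lemma Omi_subset_Gam {i j : ℕ} (h : i ≤ j) : Omi b V i ⊆ Gam b V j :=
  subset_biUnion_of_mem (u := Omi b V) (Finset.mem_range.2 (Nat.lt_succ_of_le h))

lemma mem_Omi_succ_floor (hV : V ⊆ Ioo 0 b) {y w : ℝ} (hw : w ∈ V) (hy : y ≤ 0) :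
    (y, w) ∈ Omi b V (⌊-y * b / w⌋₊ + 1) := by
  obtain ⟨hw0, hwb⟩ := hV hw
  have hb : 0 < b := hw0.trans hwb
  have ht : 0 ≤ -y * b / w := div_nonneg (mul_nonneg (neg_nonneg.2 hy) hb.le) hw0.le
  have hle := Nat.floor_le ht
  have hlt := Nat.lt_floor_add_one (-y * b / w)
  rw [le_div_iff₀ hw0] at hle
  rw [div_lt_iff₀ hw0] at hlt
  refine ⟨hw, ?_, ?_⟩
  · push_cast
    rw [neg_lt, ← div_eq_mul_inv, lt_div_iff₀ hb]
    linarith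
  · rw [le_neg, ← div_eq_mul_inv, div_le_iff₀ hb]
    linarith

lemma mem_Gam_of_lt (hV : V ⊆ Ioo 0 b) {i : ℕ} {y w : ℝ} (hw : w ∈ V) (hy : y < 1)
    (hi : -y * b / w < i) : (y, w) ∈ Gam b V i := by
  rcases lt_or_ge 0 y with hy0 | hy0
  · exact Omi_subset_Gam (Nat.zero_le i) ⟨⟨hy0, hy⟩, hw⟩
  · obtain ⟨hw0, hwb⟩ := hV hw
    have ht : 0 ≤ -y * b / w :=
      div_nonneg (mul_nonneg (neg_nonneg.2 hy0) (hw0.trans hwb).le) hw0.le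
    have := (Nat.floor_lt ht).2 hi
    exact Omi_subset_Gam (by omega) (mem_Omi_succ_floor hV hw hy0)

lemma shear_mem_Gam (hV : V ⊆ Ioo 0 b) {i : ℕ} {x v w : ℝ} (hxv : (x, v) ∈ Omi b V (i + 1))
    (hx : x < 0) (hw : w ∈ V) : (1 + x * w * v⁻¹, w) ∈ Gam b V i := by
  obtain ⟨hv, hlow, -⟩ := hxv
  obtain ⟨hv0, -⟩ := hV hv
  obtain ⟨hw0, hwb⟩ := hV hw
  have hb : 0 < b := hw0.trans hwb
  apply mem_Gam_of_lt hV hw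
  · have : x * w * v⁻¹ < 0 := mul_neg_of_neg_of_pos (mul_neg_of_neg_of_pos hx hw0) (by positivity)
    linarith
  · have hdepth : -x * b / v < i + 1 := by
      rw [div_lt_iff₀ hv0]
      rw [neg_lt, ← div_eq_mul_inv, lt_div_iff₀ hb] at hlow
      linarith
    have hbw : 1 < b / w := (one_lt_div hw0).2 hwb
    calc -(1 + x * w * v⁻¹) * b / w = -x * b / v - b / w := by field_simp; ring
      _ < i := by linarith

lemma Iio_prod_subset_iUnion_Gam (hV : V ⊆ Ioo 0 b) : Iio 1 ×ˢ V ⊆ ⋃ i, Gam b V i := by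
  rintro ⟨x, v⟩ ⟨hx, hv⟩
  obtain ⟨i, hi⟩ := exists_nat_gt (-x * b / v)
  exact mem_iUnion.2 ⟨i, mem_Gam_of_lt hV hv hx hi⟩

end Strips

lemma volume_setOf_one_add_mul_mem {c : ℝ} (hc : c ≠ 0) {s : Set ℝ} (hs : volume s = 0) :
    volume {x : ℝ | 1 + x * c ∈ s} = 0 := by
  change volume ((· * c) ⁻¹' ((1 + ·) ⁻¹' s)) = 0
  rw [Real.volume_preimage_mul_right hc, measure_preimage_add, hs, mul_zero]

section Product

variable {ν : Measure ℝ} [SFinite ν] {P : ℝ × ℝ → Prop}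

lemma ae_one_add_fst_of_ae (h : ∀ᵐ z ∂(volume : Measure ℝ).prod ν, P z) :
    ∀ᵐ z ∂(volume : Measure ℝ).prod ν, P (1 + z.1, z.2) :=
  ((measurePreserving_add_left volume 1).prod (.id ν)).quasiMeasurePreserving.ae h

lemma ae_shear_notMem_of_section_null {t : Set (ℝ × ℝ)} (ht : MeasurableSet t) {w : ℝ}
    (hw : volume ((·, w) ⁻¹' t) = 0) :
    ∀ᵐ z ∂(volume : Measure ℝ).prod ν, w ≠ 0 → z.2 ≠ 0 → (1 + z.1 * w * z.2⁻¹, w) ∉ t := by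
  have hS : MeasurableSet {z : ℝ × ℝ | w ≠ 0 ∧ z.2 ≠ 0 ∧ (1 + z.1 * w * z.2⁻¹, w) ∈ t} := by
    measurability
  rw [ae_iff]
  simp only [Classical.not_imp, not_not]
  rw [Measure.prod_apply_symm hS, ← lintegral_zero]
  refine lintegral_congr fun v => ?_
  rcases eq_or_ne w 0 with hw0 | hw0
  · simp [hw0]
  rcases eq_or_ne v 0 with hv0 | hv0
  · simp [hv0]
  refine measure_mono_null (fun x hx => ?_)
    (volume_setOf_one_add_mul_mem (mul_ne_zero hw0 (inv_ne_zero hv0)) hw)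
  simpa [mul_assoc] using hx.2.2

lemma ae_ae_shear_of_ae (h : ∀ᵐ z ∂(volume : Measure ℝ).prod ν, P z) :
    ∀ᵐ z ∂(volume : Measure ℝ).prod ν, ∀ᵐ w ∂ν,
      w ≠ 0 → z.2 ≠ 0 → P (1 + z.1 * w * z.2⁻¹, w) := by
  obtain ⟨t, hPt, ht, ht0⟩ := exists_measurable_superset_of_null (ae_iff.1 h)
  have hsec : ∀ᵐ w ∂ν, volume ((·, w) ⁻¹' t) = 0 := by
    rwa [Measure.prod_apply_symm ht,
      lintegral_eq_zero_iff (measurable_measure_prodMk_right ht)] at ht0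
  have hmeas : MeasurableSet
      {zw : (ℝ × ℝ) × ℝ | zw.2 ≠ 0 → zw.1.2 ≠ 0 → (1 + zw.1.1 * zw.2 * zw.1.2⁻¹, zw.2) ∉ t} := by
    measurability
  have htw := (Measure.ae_ae_comm (μ := (volume : Measure ℝ).prod ν) (ν := ν) hmeas).2
    (hsec.mono fun w hw => ae_shear_notMem_of_section_null ht hw)
  filter_upwards [htw] with z hz
  filter_upwards [hz] with w hw hw0 hv0
  by_contra hP
  exact hw hw0 hv0 (hPt hP)

end Product

lemma ae_ell_of_ae {p q : ℝ} {k : ℝ → ℝ → ℝ} {ν : Measure ℝ} {V : Set ℝ} (hV : MeasurableSet V)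
    {v : ℝ} {P : ℝ → Prop} (h : ∀ᵐ w ∂ν, w ∈ V → P w) (hv : P v) :
    ∀ᵐ w ∂ell p q k ν V v, P w := by
  rw [ell, ae_add_measure_iff]
  refine ⟨(withDensity_absolutelyContinuous _ _).ae_le ((ae_restrict_iff' hV).2 h), ?_⟩
  exact Measure.ae_smul_measure (by rwa [ae_dirac_eq]) _

lemma ae_nonneg_restrict_Gam {b p q : ℝ} {k : ℝ → ℝ → ℝ} {ν : Measure ℝ} [SFinite ν]
    {V : Set ℝ} (hV : V ⊆ Ioo 0 b) (hVm : MeasurableSet V) {g : ℝ × ℝ → ℝ}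
    (h₀ : ∀ᵐ z ∂((volume : Measure ℝ).prod ν).restrict (Ioo 0 1 ×ˢ V), 0 ≤ g z)
    (hrec : ∀ᵐ z ∂((volume : Measure ℝ).prod ν).restrict (Iio 1 ×ˢ V),
      z.1 ≤ 0 → g z = ∫ w, g (1 + z.1 * w * z.2⁻¹, w) ∂(ell p q k ν V z.2)) (i : ℕ) :
    ∀ᵐ z ∂((volume : Measure ℝ).prod ν).restrict (Gam b V i), 0 ≤ g z := by
  induction i with
  | zero => rwa [Gam_zero]
  | succ i ih =>
    rw [Gam_succ, ae_restrict_union_iff]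
    refine ⟨ih, ?_⟩
    rw [ae_restrict_iff' (measurableSet_Gam hVm i)] at ih
    -- at `x = 0` the recursion reads `f̃` on `{1} × V`, outside every `Γ_i`
    have hx0 : ∀ᵐ z ∂(volume : Measure ℝ).prod ν, z.1 ≠ 0 :=
      Measure.quasiMeasurePreserving_fst.ae (compl_mem_ae_iff.2 (measure_singleton 0))
    filter_upwards [ae_restrict_of_ae_restrict_of_subset (Omi_succ_subset_Iio_prod hV i) hrec,
      ae_restrict_mem (measurableSet_Omi hVm (i + 1)), ae_restrict_of_ae hx0,
      ae_restrict_of_ae (ae_one_add_fst_of_ae ih), ae_restrict_of_ae (ae_ae_shear_of_ae ih)]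
      with z hrec_z hz hx0 htrans hshear
    obtain ⟨x, v⟩ := z
    have hv := hz.1
    have hx : x < 0 := (fst_nonpos_of_mem_Omi_succ hV hz).lt_of_ne hx0
    rw [hrec_z hx.le]
    refine integral_nonneg_of_ae (ae_ell_of_ae hVm ?_ ?_)
    · filter_upwards [hshear] with w hw hwV
      exact hw (hV hwV).1.ne' (hV hv).1.ne' (shear_mem_Gam hV hz hx hwV)
    · have hxv : x * v * v⁻¹ = x := mul_inv_cancel_right₀ (hV hv).1.ne' x
      have := shear_mem_Gam hV hz hx hv
      show 0 ≤ g (1 + x * v * v⁻¹, v)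
      rw [hxv] at this ⊢
      exact htrans this

theorem stmt5_general
    (a b p q : ℝ) (ha : 0 ≤ a)
    (V : Set ℝ) (hV : V ⊆ Set.Ioo a b) (hVm : MeasurableSet V)
    (ν : Measure ℝ) [SigmaFinite ν]
    (k : ℝ → ℝ → ℝ)
    (f ftil : ℝ × ℝ → ℝ)
    (hfnn : ∀ᵐ z ∂(((volume : Measure ℝ).prod ν).restrict ((Set.Ioo (0 : ℝ) 1) ×ˢ V)),
      0 ≤ f z)
    (hext : IsBoundaryExtension b p q k ν V f ftil) :
    ∀ᵐ z ∂(((volume : Measure ℝ).prod ν).restrict ((Set.Iio (1 : ℝ)) ×ˢ V)),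
      0 ≤ ftil z := by
  obtain ⟨-, -, hftil_eq, hrec⟩ := hext
  have hV₀ : V ⊆ Ioo 0 b := fun v hv => ⟨ha.trans_lt (hV hv).1, (hV hv).2⟩
  have h₀ : ∀ᵐ z ∂((volume : Measure ℝ).prod ν).restrict (Ioo 0 1 ×ˢ V), 0 ≤ ftil z := by
    filter_upwards [ae_restrict_of_ae_restrict_of_subset
      (prod_mono Ioo_subset_Iio_self subset_rfl) hftil_eq,
      ae_restrict_mem (measurableSet_Ioo.prod hVm), hfnn] with z hftil_z hz hf_z
    rwa [hftil_z hz.1.1]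
  refine ae_restrict_of_ae_restrict_of_subset (Iio_prod_subset_iUnion_Gam hV₀) ?_
  exact (ae_restrict_iUnion_iff _ _).2
    (ae_nonneg_restrict_Gam hV₀ hVm h₀ (hrec.mono fun z hz hx => (hz hx).2))

theorem stmt5
    (a b p q : ℝ) (ha : 0 ≤ a) (hab : a < b)
    (hp : 0 ≤ p) (hq : 0 ≤ q) (hpq : 0 < p + q)
    (V : Set ℝ) (hV : V ⊆ Set.Ioo a b) (hVm : MeasurableSet V)
    (ν : Measure ℝ) [SigmaFinite ν]
    (k : ℝ → ℝ → ℝ) (hkm : Measurable (Function.uncurry k))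
    (hknn : ∀ w v : ℝ, 0 ≤ k w v)
    (hk1 : ∀ w ∈ V, ∫ v in V, k w v ∂ν = 1)
    (f ftil : ℝ × ℝ → ℝ)
    (hf : IntegrableOn f ((Set.Ioo (0 : ℝ) 1) ×ˢ V) ((volume : Measure ℝ).prod ν))
    (hfnn : ∀ᵐ z ∂(((volume : Measure ℝ).prod ν).restrict ((Set.Ioo (0 : ℝ) 1) ×ˢ V)),
      0 ≤ f z)
    (hext : IsBoundaryExtension b p q k ν V f ftil) :
    ∀ᵐ z ∂(((volume : Measure ℝ).prod ν).restrict ((Set.Iio (1 : ℝ)) ×ˢ V)),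
      0 ≤ ftil z :=
  stmt5_general a b p q ha V hV hVm ν k f ftil hfnn hext
end
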